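/- arXiv:1908.05165 — 7 statements merged into one kernel-verified Lean document; each statement's English description precedes it below -/
import Mathlib

section
/- For every nonzero real number λ and every complex number z with Re z > 0, the integral ∫₀^∞ (−(sgn(λ)/2)·erfc(|λ|·√t))·t^{z−1} dt converges and equals −(Γ(z+1/2)/(2z·√π))·sgn(λ)·|λ|^{−2z}. -/
/-! Integrate by parts against `t ^ z / z`. The boundary terms vanish because
`erfc x ≤ exp (-x ^ 2)`, and `d/dt erfc (a √t) = -(a / √π) e^{-a² t} t^{-1/2}`, so the integral
becomes `a / (z √π) ∫₀^∞ t^{z - 1/2} e^{-a² t} dt = a / (z √π) · Γ(z + 1/2) · a^{-2z-1}`. -/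

open MeasureTheory Real Set

noncomputable def erfc (x : ℝ) : ℝ :=
  (2 / Real.sqrt π) * ∫ ξ in Ioi x, Real.exp (-ξ ^ 2)

open Filter Topology

lemma integrable_exp_neg_sq : Integrable fun ξ : ℝ => exp (-ξ ^ 2) := by
  simpa using integrable_exp_neg_mul_sq one_pos

lemma hasDerivAt_erfc (x : ℝ) : HasDerivAt erfc (-(2 / √π) * exp (-x ^ 2)) x := by
  have hsplit : erfc = fun y => 2 / √π *
      ((∫ ξ in Ioi 0, exp (-ξ ^ 2)) - ∫ ξ in (0 : ℝ)..y, exp (-ξ ^ 2)) := by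
    ext y
    rw [erfc, ← intervalIntegral.integral_interval_add_Ioi (a := 0) (b := y)
      integrable_exp_neg_sq.integrableOn integrable_exp_neg_sq.integrableOn, add_sub_cancel_left]
  have hcont : Continuous fun ξ : ℝ => exp (-ξ ^ 2) := by fun_prop
  have hI := intervalIntegral.integral_hasDerivAt_right (a := 0)
    integrable_exp_neg_sq.intervalIntegrable (hcont.stronglyMeasurableAtFilter _ _)
    hcont.continuousAt (b := x)
  rw [hsplit, neg_mul, ← mul_neg]
  exact (hI.const_sub _).const_mul _

@[fun_prop]
lemma continuous_erfc : Continuous erfc :=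
  continuous_iff_continuousAt.2 fun x => (hasDerivAt_erfc x).continuousAt

lemma erfc_nonneg (x : ℝ) : 0 ≤ erfc x :=
  mul_nonneg (by positivity) (setIntegral_nonneg measurableSet_Ioi fun _ _ => (exp_pos _).le)

lemma integral_Ioi_comp_sub_right {E : Type*} [NormedAddCommGroup E] [NormedSpace ℝ E]
    (g : ℝ → E) (x : ℝ) :
    ∫ ξ in Ioi x, g (ξ - x) = ∫ u in Ioi 0, g u := by
  simpa using (measurePreserving_sub_right volume x).setIntegral_preimage_emb
    (measurableEmbedding_subRight x) g (Ioi 0)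

lemma erfc_le_exp_neg_sq {x : ℝ} (hx : 0 ≤ x) : erfc x ≤ exp (-x ^ 2) := by
  -- `ξ² ≥ x² + (ξ - x)²` for `ξ ≥ x ≥ 0`
  have htail : ∫ ξ in Ioi x, exp (-ξ ^ 2) ≤ exp (-x ^ 2) * (√π / 2) := by
    calc ∫ ξ in Ioi x, exp (-ξ ^ 2)
        ≤ ∫ ξ in Ioi x, exp (-x ^ 2) * exp (-(ξ - x) ^ 2) := by
          refine setIntegral_mono_on integrable_exp_neg_sq.integrableOn
            ((integrable_exp_neg_sq.comp_sub_right x).const_mul _).integrableOn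
            measurableSet_Ioi fun ξ hξ => ?_
          rw [← exp_add, exp_le_exp]
          nlinarith [mem_Ioi.1 hξ]
      _ = exp (-x ^ 2) * (√π / 2) := by
          rw [integral_const_mul, integral_Ioi_comp_sub_right (fun u => exp (-u ^ 2))]
          simpa using integral_gaussian_Ioi 1
  calc erfc x ≤ 2 / √π * (exp (-x ^ 2) * (√π / 2)) :=
        mul_le_mul_of_nonneg_left htail (by positivity)
    _ = exp (-x ^ 2) := by field_simp

lemma integrableOn_cpow_mul_exp_neg_mul_Ioi {w : ℂ} (hw : 0 < w.re) {r : ℝ} (hr : 0 < r) :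
    IntegrableOn (fun t : ℝ => (t : ℂ) ^ (w - 1) * Complex.exp (-(r * t))) (Ioi 0) := by
  have hGamma : MellinConvergent (fun t : ℝ => Complex.exp (-t)) w := by
    simpa [MellinConvergent, mul_comm, Complex.ofReal_exp] using
      Complex.GammaIntegral_convergent hw
  simpa [MellinConvergent] using (MellinConvergent.comp_mul_left hr).2 hGamma

lemma hasDerivAt_erfc_mul_sqrt (a : ℝ) {t : ℝ} (ht : 0 < t) :
    HasDerivAt (fun t => erfc (a * √t)) (-(a / √π) * exp (-(a ^ 2 * t)) / √t) t := by
  have hsq : (a * √t) ^ 2 = a ^ 2 * t := by rw [mul_pow, sq_sqrt ht.le]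
  refine ((hasDerivAt_erfc (a * √t)).comp t
    ((hasDerivAt_sqrt ht.ne').const_mul a)).congr_deriv ?_
  rw [hsq]
  field_simp

lemma norm_erfc_mul_sqrt_mul_cpow_le {a : ℝ} (ha : 0 ≤ a) {t : ℝ} (ht : 0 < t) (w : ℂ) :
    ‖(erfc (a * √t) : ℂ) * (t : ℂ) ^ w‖ ≤ t ^ w.re * exp (-(a ^ 2 * t)) := by
  have hsq : (a * √t) ^ 2 = a ^ 2 * t := by rw [mul_pow, sq_sqrt ht.le]
  rw [norm_mul, Complex.norm_real, norm_of_nonneg (erfc_nonneg _),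
    Complex.norm_cpow_eq_rpow_re_of_pos ht, mul_comm]
  gcongr
  simpa [hsq] using erfc_le_exp_neg_sq (by positivity : 0 ≤ a * √t)

lemma integrableOn_erfc_mul_sqrt_mul_cpow {a : ℝ} (ha : 0 < a) {z : ℂ} (hz : 0 < z.re) :
    IntegrableOn (fun t : ℝ => (erfc (a * √t) : ℂ) * (t : ℂ) ^ (z - 1)) (Ioi 0) := by
  refine Integrable.mono
    (integrableOn_cpow_mul_exp_neg_mul_Ioi hz (by positivity : 0 < a ^ 2)) ?_ ?_
  · refine ContinuousOn.aestronglyMeasurable (fun t ht => ?_) measurableSet_Ioi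
    exact ((by fun_prop : Continuous fun t : ℝ => (erfc (a * √t) : ℂ)).continuousAt.mul
      (Complex.continuousAt_ofReal_cpow_const t (z - 1) (Or.inr (ne_of_gt ht)))).continuousWithinAt
  · refine (ae_restrict_iff' measurableSet_Ioi).2 (ae_of_all _ fun t (ht : 0 < t) => ?_)
    refine (norm_erfc_mul_sqrt_mul_cpow_le ha.le ht (z - 1)).trans_eq ?_
    rw [norm_mul, Complex.norm_cpow_eq_rpow_re_of_pos ht, Complex.norm_exp, ← Complex.ofReal_mul,
      ← Complex.ofReal_neg, Complex.ofReal_re]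

lemma mul_one_div_sq_cpow_add_half {a : ℝ} (ha : 0 < a) (z : ℂ) :
    (a : ℂ) * (1 / ((a ^ 2 : ℝ) : ℂ)) ^ (z + 1 / 2) = (a : ℂ) ^ (-(2 * z)) := by
  have ha' : (a : ℂ) ≠ 0 := by exact_mod_cast ha.ne'
  have hb : ((1 / a ^ 2 : ℝ) : ℂ) ≠ 0 := by norm_num [ha.ne']
  rw [← Complex.ofReal_one, ← Complex.ofReal_div, Complex.cpow_def_of_ne_zero hb,
    Complex.cpow_def_of_ne_zero ha', ← Complex.ofReal_log (by positivity),
    ← Complex.ofReal_log ha.le, Real.log_div one_ne_zero (by positivity), Real.log_one,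
    Real.log_pow]
  conv_lhs => rw [← Complex.exp_log ha', ← Complex.ofReal_log ha.le, ← Complex.exp_add]
  push_cast
  ring_nf

lemma cpow_div_sqrt {t : ℝ} (ht : 0 < t) (z : ℂ) :
    (t : ℂ) ^ z / (√t : ℂ) = (t : ℂ) ^ (z - 1 / 2) := by
  rw [sqrt_eq_rpow, Complex.ofReal_cpow ht.le, ← Complex.cpow_sub _ _ (by exact_mod_cast ht.ne')]
  norm_num

lemma tendsto_erfc_mul_sqrt_mul_cpow {a : ℝ} (ha : 0 ≤ a) (z : ℂ) {l : Filter ℝ}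
    (hl : ∀ᶠ t in l, 0 < t) (hdecay : Tendsto (fun t => t ^ z.re * exp (-(a ^ 2 * t))) l (𝓝 0)) :
    Tendsto (fun t : ℝ => (erfc (a * √t) : ℂ) * (t : ℂ) ^ z) l (𝓝 0) :=
  squeeze_zero_norm' (hl.mono fun _ ht => norm_erfc_mul_sqrt_mul_cpow_le ha ht z) hdecay

theorem integral_erfc_mul_sqrt_mul_cpow {a : ℝ} (ha : 0 < a) {z : ℂ} (hz : 0 < z.re) :
    ∫ t in Ioi (0 : ℝ), (erfc (a * √t) : ℂ) * (t : ℂ) ^ (z - 1)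
      = Complex.Gamma (z + 1 / 2) / (z * √π) * (a : ℂ) ^ (-(2 * z)) := by
  have hz0 : z ≠ 0 := by rintro rfl; simp at hz
  have hw : 0 < (z + 1 / 2).re := by simp; linarith
  have hv : ∀ t ∈ Ioi (0 : ℝ), HasDerivAt (fun t : ℝ => (t : ℂ) ^ z / z) ((t : ℂ) ^ (z - 1)) t :=
    fun t ht => by
      simpa using hasDerivAt_ofReal_cpow_const' (ne_of_gt ht) (by simpa using hz0 : z - 1 ≠ -1)
  have hu'v : ∀ t ∈ Ioi (0 : ℝ),
      ((-(a / √π) * exp (-(a ^ 2 * t)) / √t : ℝ) : ℂ) * ((t : ℂ) ^ z / z)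
        = -(a / (z * √π)) * ((t : ℂ) ^ (z + 1 / 2 - 1) * Complex.exp (-((a ^ 2 : ℝ) * t))) :=
    fun t ht => by
      rw [show z + 1 / 2 - 1 = z - 1 / 2 by ring, ← cpow_div_sqrt ht]
      push_cast
      ring
  have hboundary : ∀ l : Filter ℝ, (∀ᶠ t in l, 0 < t) →
      Tendsto (fun t => t ^ z.re * exp (-(a ^ 2 * t))) l (𝓝 0) →
      Tendsto ((fun t : ℝ => (erfc (a * √t) : ℂ)) * fun t : ℝ => (t : ℂ) ^ z / z) l (𝓝 0) :=
    fun l hl hdecay => by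
      simpa only [Pi.mul_def, mul_div_assoc, zero_div] using
        (tendsto_erfc_mul_sqrt_mul_cpow ha.le z hl hdecay).div_const z
  rw [integral_Ioi_mul_deriv_eq_deriv_mul (fun t ht => (hasDerivAt_erfc_mul_sqrt a ht).ofReal_comp)
    hv (integrableOn_erfc_mul_sqrt_mul_cpow ha hz) ?_ (hboundary _ self_mem_nhdsWithin ?_)
    (hboundary _ (Ioi_mem_atTop 0) ?_), setIntegral_congr_fun measurableSet_Ioi hu'v,
    integral_const_mul, Complex.integral_cpow_mul_exp_neg_mul_Ioi hw (by positivity),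
    ← mul_one_div_sq_cpow_add_half ha]
  · ring
  · exact IntegrableOn.congr_fun
      ((integrableOn_cpow_mul_exp_neg_mul_Ioi hw (by positivity)).const_mul _)
      (fun t ht => (hu'v t ht).symm) measurableSet_Ioi
  · have hcont : ContinuousAt (fun t => t ^ z.re * exp (-(a ^ 2 * t))) 0 :=
      (continuousAt_rpow_const _ _ (Or.inr hz.le)).mul (by fun_prop)
    simpa [zero_rpow hz.ne'] using hcont.tendsto.mono_left nhdsWithin_le_nhds
  · simpa only [neg_mul] using
      tendsto_rpow_mul_exp_neg_mul_atTop_nhds_zero z.re (a ^ 2) (by positivity)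

/-- For every nonzero real `λ` and every complex `z` with `Re z > 0`, the integral
`∫₀^∞ (−(sgn(λ)/2)·erfc(|λ|·√t))·t^{z−1} dt` converges and equals
`−(Γ(z+1/2)/(2z·√π))·sgn(λ)·|λ|^{−2z}`. -/
theorem stmt_3 (lam : ℝ) (hlam : lam ≠ 0) (z : ℂ) (hz : 0 < z.re) :
    IntegrableOn
      (fun t : ℝ => ((-(Real.sign lam / 2) * erfc (|lam| * Real.sqrt t) : ℝ) : ℂ)
        * (t : ℂ) ^ (z - 1)) (Ioi 0) volume ∧
    ∫ t in Ioi (0 : ℝ),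
        ((-(Real.sign lam / 2) * erfc (|lam| * Real.sqrt t) : ℝ) : ℂ) * (t : ℂ) ^ (z - 1)
      = -(Complex.Gamma (z + 1/2) / (2 * z * Real.sqrt π))
          * (Real.sign lam : ℂ) * ((|lam| : ℝ) : ℂ) ^ (-(2 * z)) := by
  have ha : 0 < |lam| := abs_pos.2 hlam
  have hfactor : (fun t : ℝ => ((-(Real.sign lam / 2) * erfc (|lam| * √t) : ℝ) : ℂ)
        * (t : ℂ) ^ (z - 1))
      = fun t : ℝ =>
          (-(Real.sign lam / 2) : ℂ) * ((erfc (|lam| * √t) : ℂ) * (t : ℂ) ^ (z - 1)) := by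
    funext t
    push_cast
    ring
  rw [hfactor, integral_const_mul, integral_erfc_mul_sqrt_mul_cpow ha hz]
  refine ⟨(integrableOn_erfc_mul_sqrt_mul_cpow ha hz).const_mul _, ?_⟩
  field_simp
end

section
/- Let (λ_n)_{n∈ℕ} be a sequence of nonzero real numbers satisfying a Weyl-type counting bound of order m. Then there is a constant C′ > 0 such that for all t with 0 < t ≤ 1, the series Σ_n |λ_n|·exp(−t·λ_n²) converges and is bounded above by C′·t^{−(m+1)/2}. -/
open MeasureTheory Real Set

/-- A sequence `(λ_n)` of real numbers satisfies a Weyl-type counting bound of order `m`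
if there is a constant `C > 0` such that for every `T ≥ 0` the set `{n : |λ_n| ≤ T}` is
finite with cardinality at most `C·(1+T)^m`. -/
def WeylBound (lam : ℕ → ℝ) (m : ℕ) : Prop :=
  ∃ C > (0 : ℝ), ∀ T : ℝ, 0 ≤ T →
    {n : ℕ | |lam n| ≤ T}.Finite ∧ ({n : ℕ | |lam n| ≤ T}.ncard : ℝ) ≤ C * (1 + T) ^ m

/-!
Put `s = √t` and sort the indices into the shells `k = ⌊s |λ_n|⌋`. On shell `k` every term is at
most `((k+1)/s) e^{-k²}`, and the Weyl bound with `T = (k+1)/s` allows at most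
`C (1+T)^m ≤ C 2^m ((k+1)/s)^m` indices there. Summing over the shells gives
`C 2^m s^{-(m+1)} Σ_k (k+1)^{m+1} e^{-k²}`, a convergent series times `t^{-(m+1)/2}`.
-/

theorem summable_and_tsum_le_of_sum_fiber_le {ι κ : Type*} {f : ι → ℝ} {a : κ → ℝ}
    (g : ι → κ) (hf : 0 ≤ f) (ha : Summable a)
    (h : ∀ k (u : Finset ι), (∀ i ∈ u, g i = k) → ∑ i ∈ u, f i ≤ a k) :
    Summable f ∧ ∑' i, f i ≤ ∑' k, a k := by
  classical
  have ha0 : ∀ k, 0 ≤ a k := fun k => by simpa using h k ∅ (by simp)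
  have hsum : ∀ u : Finset ι, ∑ i ∈ u, f i ≤ ∑' k, a k := by
    intro u
    rw [← Finset.sum_fiberwise_of_maps_to fun i hi => Finset.mem_image_of_mem g hi]
    calc ∑ k ∈ u.image g, ∑ i ∈ u with g i = k, f i
        ≤ ∑ k ∈ u.image g, a k :=
          Finset.sum_le_sum fun k _ => h k _ fun i hi => (Finset.mem_filter.1 hi).2
      _ ≤ ∑' k, a k := ha.sum_le_tsum _ fun k _ => ha0 k
  exact ⟨summable_of_sum_le hf hsum, Real.tsum_le_of_sum_le hf hsum⟩

theorem summable_add_one_pow_mul_exp_neg_sq (m : ℕ) :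
    Summable fun k : ℕ => ((k : ℝ) + 1) ^ m * exp (-(k : ℝ) ^ 2) := by
  have hshift : Summable fun k : ℕ => ((k : ℝ) + 1) ^ m * exp (-1 * ((k : ℝ) + 1)) := by
    simpa using (summable_nat_add_iff 1).2 (summable_pow_mul_exp_neg_nat_mul m one_pos)
  refine (hshift.mul_left (exp 1)).of_nonneg_of_le (fun k => by positivity) fun k => ?_
  have hk : (k : ℝ) ≤ (k : ℝ) ^ 2 := by exact_mod_cast Nat.le_self_pow two_ne_zero k
  calc ((k : ℝ) + 1) ^ m * exp (-(k : ℝ) ^ 2)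
      ≤ ((k : ℝ) + 1) ^ m * exp (1 + -1 * ((k : ℝ) + 1)) := by gcongr; linarith
    _ = exp 1 * (((k : ℝ) + 1) ^ m * exp (-1 * ((k : ℝ) + 1))) := by rw [exp_add]; ring

theorem abs_le_floor_mul_abs_add_one_div {s : ℝ} (hs : 0 < s) (x : ℝ) :
    |x| ≤ (⌊s * |x|⌋₊ + 1) / s := by
  rw [le_div_iff₀ hs, mul_comm]
  exact (Nat.lt_floor_add_one _).le

theorem exp_neg_sq_mul_sq_le_exp_neg_floor_sq {s : ℝ} (hs : 0 ≤ s) (x : ℝ) :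
    exp (-(s ^ 2 * x ^ 2)) ≤ exp (-(⌊s * |x|⌋₊ : ℝ) ^ 2) := by
  have hfloor : (⌊s * |x|⌋₊ : ℝ) ≤ s * |x| := Nat.floor_le (by positivity)
  have hsq : (⌊s * |x|⌋₊ : ℝ) ^ 2 ≤ s ^ 2 * x ^ 2 := by
    rw [← sq_abs x, ← mul_pow]
    exact pow_le_pow_left₀ (Nat.cast_nonneg _) hfloor 2
  gcongr

theorem sum_abs_mul_exp_neg_le_of_floor_eq {lam : ℕ → ℝ} {m : ℕ} {C s : ℝ}
    (hN : ∀ T : ℝ, 0 ≤ T →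
      {n : ℕ | |lam n| ≤ T}.Finite ∧ ({n : ℕ | |lam n| ≤ T}.ncard : ℝ) ≤ C * (1 + T) ^ m)
    (hC : 0 ≤ C) (hs : 0 < s) (hs1 : s ≤ 1) (k : ℕ) (u : Finset ℕ)
    (hu : ∀ n ∈ u, ⌊s * |lam n|⌋₊ = k) :
    ∑ n ∈ u, |lam n| * exp (-(s ^ 2 * lam n ^ 2))
      ≤ C * 2 ^ m * s⁻¹ ^ (m + 1) * (((k : ℝ) + 1) ^ (m + 1) * exp (-(k : ℝ) ^ 2)) := by
  set T := ((k : ℝ) + 1) / s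
  have hT1 : 1 ≤ T := by rw [le_div_iff₀ hs]; linarith [(k.cast_nonneg : (0 : ℝ) ≤ k)]
  have hlam : ∀ n ∈ u, |lam n| ≤ T := fun n hn => by
    simpa [hu n hn] using abs_le_floor_mul_abs_add_one_div hs (lam n)
  have hterm : ∀ n ∈ u, |lam n| * exp (-(s ^ 2 * lam n ^ 2)) ≤ T * exp (-(k : ℝ) ^ 2) :=
    fun n hn => by
      have := exp_neg_sq_mul_sq_le_exp_neg_floor_sq hs.le (lam n)
      rw [hu n hn] at this
      exact mul_le_mul (hlam n hn) this (exp_pos _).le (by positivity)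
  have hcard : (u.card : ℝ) ≤ C * (1 + T) ^ m := by
    obtain ⟨hfin, hle⟩ := hN T (by positivity)
    have hsub : (u : Set ℕ) ⊆ {n | |lam n| ≤ T} := hlam
    have := Set.ncard_le_ncard hsub hfin
    rw [Set.ncard_coe_finset] at this
    exact (Nat.cast_le.2 this).trans hle
  calc ∑ n ∈ u, |lam n| * exp (-(s ^ 2 * lam n ^ 2))
      ≤ u.card * (T * exp (-(k : ℝ) ^ 2)) := by
        simpa using Finset.sum_le_sum hterm
    _ ≤ C * (1 + T) ^ m * (T * exp (-(k : ℝ) ^ 2)) := by gcongr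
    _ ≤ C * (2 * T) ^ m * (T * exp (-(k : ℝ) ^ 2)) := by gcongr; linarith
    _ = C * 2 ^ m * s⁻¹ ^ (m + 1) * (((k : ℝ) + 1) ^ (m + 1) * exp (-(k : ℝ) ^ 2)) := by
        simp only [T]; rw [mul_pow, div_pow, div_eq_mul_inv _ s]; ring

theorem stmt_5_general (m : ℕ) (lam : ℕ → ℝ)
    (hW : WeylBound lam m) :
    ∃ C' > (0 : ℝ), ∀ t : ℝ, 0 < t → t ≤ 1 →
      Summable (fun n : ℕ => |lam n| * Real.exp (-(t * lam n ^ 2))) ∧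
      (∑' n : ℕ, |lam n| * Real.exp (-(t * lam n ^ 2)))
        ≤ C' * t ^ (-((m : ℝ) + 1) / 2) := by
  obtain ⟨C, hC, hN⟩ := hW
  have hφ := summable_add_one_pow_mul_exp_neg_sq (m + 1)
  have hφ0 : 0 < ∑' k : ℕ, ((k : ℝ) + 1) ^ (m + 1) * exp (-(k : ℝ) ^ 2) :=
    hφ.tsum_pos (fun k => by positivity) 0 (by positivity)
  refine ⟨C * 2 ^ m * ∑' k : ℕ, ((k : ℝ) + 1) ^ (m + 1) * exp (-(k : ℝ) ^ 2), by positivity,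
    fun t ht ht1 => ?_⟩
  obtain ⟨s, hs, rfl⟩ : ∃ s, 0 < s ∧ s ^ 2 = t := ⟨√t, sqrt_pos.2 ht, sq_sqrt ht.le⟩
  have hs1 : s ≤ 1 := (sq_le_one_iff₀ hs.le).1 ht1
  obtain ⟨hsum, hle⟩ := summable_and_tsum_le_of_sum_fiber_le (fun n => ⌊s * |lam n|⌋₊)
    (fun n => by positivity) (hφ.mul_left (C * 2 ^ m * s⁻¹ ^ (m + 1)))
    (sum_abs_mul_exp_neg_le_of_floor_eq hN hC.le hs hs1)
  have hpow : (s ^ 2) ^ (-((m : ℝ) + 1) / 2) = s⁻¹ ^ (m + 1) := by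
    rw [← rpow_natCast_mul hs.le, show ((2 : ℕ) : ℝ) * (-((m : ℝ) + 1) / 2) = -((m + 1 : ℕ) : ℝ)
      by push_cast; ring, rpow_neg hs.le, rpow_natCast, inv_pow]
  refine ⟨hsum, hle.trans_eq ?_⟩
  rw [tsum_mul_left, hpow]
  ring

/-- Small-time bound: the series `Σ |λ_n|·exp(−t·λ_n²)` converges for `0 < t ≤ 1` and is
`O(t^{−(m+1)/2})`. -/
theorem stmt_5 (m : ℕ) (hm : 0 < m) (lam : ℕ → ℝ) (hlam : ∀ n, lam n ≠ 0)
    (hW : WeylBound lam m) :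
    ∃ C' > (0 : ℝ), ∀ t : ℝ, 0 < t → t ≤ 1 →
      Summable (fun n : ℕ => |lam n| * Real.exp (-(t * lam n ^ 2))) ∧
      (∑' n : ℕ, |lam n| * Real.exp (-(t * lam n ^ 2)))
        ≤ C' * t ^ (-((m : ℝ) + 1) / 2) :=
  stmt_5_general m lam hW
end

section
/- Let (λ_n)_{n∈ℕ} be a sequence of nonzero real numbers satisfying a Weyl-type counting bound of order m. Then there is a constant C′ > 0 such that for all t with 0 < t ≤ 1, the series Σ_n exp(−t·λ_n²) converges and is bounded above by C′·t^{−m/2}. -/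
open MeasureTheory Real Set

/-! Group the terms by the integer part `k` of `|√t λ_n|`: the `k`-th group has
`O((k+1)^m t^{-m/2})` members by the Weyl bound at `T = (k+1)/√t`, each at most `exp(-k²)`,
so the series is at most `C t^{-m/2} ∑ₖ (k+1)^m exp(-k²)`. -/

theorem WeylBound.exists_ncard_le_pow {lam : ℕ → ℝ} {m : ℕ} (hW : WeylBound lam m) :
    ∃ C > (0 : ℝ), ∀ T : ℝ, 1 ≤ T →
      {n : ℕ | |lam n| ≤ T}.Finite ∧ ({n : ℕ | |lam n| ≤ T}.ncard : ℝ) ≤ C * T ^ m := by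
  obtain ⟨C, hC, hcount⟩ := hW
  refine ⟨C * 2 ^ m, by positivity, fun T hT => ?_⟩
  obtain ⟨hfin, hcard⟩ := hcount T (by linarith)
  refine ⟨hfin, hcard.trans ?_⟩
  rw [mul_assoc, ← mul_pow]
  gcongr
  linarith

theorem ncard_abs_mul_le_of_ncard_le_pow {lam : ℕ → ℝ} {m : ℕ} {C s : ℝ}
    (hcount : ∀ T : ℝ, 1 ≤ T →
      {n : ℕ | |lam n| ≤ T}.Finite ∧ ({n : ℕ | |lam n| ≤ T}.ncard : ℝ) ≤ C * T ^ m)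
    (hs : 0 < s) (hs1 : s ≤ 1) (k : ℕ) :
    {n | |s * lam n| ≤ k + 1}.Finite ∧
      ({n | |s * lam n| ≤ k + 1}.ncard : ℝ) ≤ C * (s ^ m)⁻¹ * ((k : ℝ) + 1) ^ m := by
  have hset : {n | |s * lam n| ≤ k + 1} = {n | |lam n| ≤ (k + 1) / s} := by
    ext n
    rw [mem_ofPred_eq, mem_ofPred_eq, abs_mul, abs_of_pos hs, le_div_iff₀' hs]
  have hT : (1 : ℝ) ≤ (k + 1) / s := by
    rw [le_div_iff₀ hs, one_mul]
    linarith [(Nat.cast_nonneg k : (0 : ℝ) ≤ k)]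
  rw [hset, mul_assoc, inv_mul_eq_div, ← div_pow]
  exact hcount _ hT

open Finset in
theorem sum_exp_neg_sq_le_of_ncard_le {ι : Type*} {a : ι → ℝ} {N : ℕ → ℝ}
    (hN : ∀ k : ℕ, {i | |a i| ≤ k + 1}.Finite ∧ ({i | |a i| ≤ k + 1}.ncard : ℝ) ≤ N k)
    (hsum : Summable fun k : ℕ => N k * exp (-(k : ℝ) ^ 2)) (u : Finset ι) :
    ∑ i ∈ u, exp (-a i ^ 2) ≤ ∑' k : ℕ, N k * exp (-(k : ℝ) ^ 2) := by
  set K : ι → ℕ := fun i => ⌊|a i|⌋₊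
  have hfiber (k : ℕ) : ∑ i ∈ u with K i = k, exp (-a i ^ 2) ≤ N k * exp (-(k : ℝ) ^ 2) := by
    obtain ⟨hfin, hcard⟩ := hN k
    have hsub : {i ∈ u | K i = k} ⊆ hfin.toFinset := fun i hi => by
      rw [mem_filter] at hi
      rw [Finite.mem_toFinset, mem_ofPred_eq, ← hi.2]
      exact (Nat.lt_floor_add_one _).le
    have hterm : ∀ i ∈ {i ∈ u | K i = k}, exp (-a i ^ 2) ≤ exp (-(k : ℝ) ^ 2) := by
      intro i hi
      rw [mem_filter] at hi
      have hk : (k : ℝ) ≤ |a i| := hi.2 ▸ Nat.floor_le (abs_nonneg _)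
      rw [exp_le_exp, neg_le_neg_iff, ← sq_abs (a i)]
      gcongr
    calc ∑ i ∈ u with K i = k, exp (-a i ^ 2)
        ≤ #{i ∈ u | K i = k} • exp (-(k : ℝ) ^ 2) := sum_le_card_nsmul _ _ _ hterm
      _ ≤ N k * exp (-(k : ℝ) ^ 2) := by
        rw [nsmul_eq_mul]
        gcongr
        refine le_trans ?_ hcard
        rw [ncard_eq_toFinset_card _ hfin]
        exact_mod_cast Finset.card_le_card hsub
  have hN_nonneg (k : ℕ) : 0 ≤ N k := (Nat.cast_nonneg _).trans (hN k).2
  calc ∑ i ∈ u, exp (-a i ^ 2)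
      = ∑ k ∈ u.image K, ∑ i ∈ u with K i = k, exp (-a i ^ 2) :=
        (sum_fiberwise_of_maps_to (fun i hi => mem_image_of_mem K hi) _).symm
    _ ≤ ∑ k ∈ u.image K, N k * exp (-(k : ℝ) ^ 2) := sum_le_sum fun k _ => hfiber k
    _ ≤ ∑' k : ℕ, N k * exp (-(k : ℝ) ^ 2) :=
        hsum.sum_le_tsum _ fun k _ => mul_nonneg (hN_nonneg k) (exp_nonneg _)

theorem rpow_neg_natCast_div_two {t : ℝ} (ht : 0 ≤ t) (m : ℕ) :
    t ^ (-(m : ℝ) / 2) = (√t ^ m)⁻¹ := by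
  rw [rpow_div_two_eq_sqrt _ ht, rpow_neg (sqrt_nonneg t), rpow_natCast]

theorem stmt_6_general (m : ℕ) (lam : ℕ → ℝ)
    (hW : WeylBound lam m) :
    ∃ C' > (0 : ℝ), ∀ t : ℝ, 0 < t → t ≤ 1 →
      Summable (fun n : ℕ => Real.exp (-(t * lam n ^ 2))) ∧
      (∑' n : ℕ, Real.exp (-(t * lam n ^ 2))) ≤ C' * t ^ (-(m : ℝ) / 2) := by
  obtain ⟨C, hC, hcount⟩ := hW.exists_ncard_le_pow
  have hB := summable_add_one_pow_mul_exp_neg_sq m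
  set B := ∑' k : ℕ, ((k : ℝ) + 1) ^ m * exp (-(k : ℝ) ^ 2)
  have hB_pos : 0 < B := hB.tsum_pos (fun k => by positivity) 0 (by positivity)
  refine ⟨C * B, by positivity, fun t ht ht1 => ?_⟩
  set s := √t
  have hs : 0 < s := sqrt_pos.2 ht
  have hscaled := ncard_abs_mul_le_of_ncard_le_pow hcount hs (sqrt_le_one.2 ht1)
  have hterm (n : ℕ) : exp (-(t * lam n ^ 2)) = exp (-(s * lam n) ^ 2) := by
    rw [mul_pow, sq_sqrt ht.le]
  have hpartial (u : Finset ℕ) : ∑ n ∈ u, exp (-(t * lam n ^ 2)) ≤ C * B * t ^ (-(m : ℝ) / 2) := by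
    simp only [hterm]
    refine (sum_exp_neg_sq_le_of_ncard_le hscaled
      (by simpa only [mul_assoc] using hB.mul_left (C * (s ^ m)⁻¹)) u).trans_eq ?_
    rw [rpow_neg_natCast_div_two ht.le, mul_right_comm, ← tsum_mul_left]
    exact tsum_congr fun k => mul_assoc _ _ _
  exact ⟨summable_of_sum_le (fun _ => (exp_pos _).le) hpartial,
    Real.tsum_le_of_sum_le (fun _ => (exp_pos _).le) hpartial⟩

/-- Small-time bound: the series `Σ exp(−t·λ_n²)` converges for `0 < t ≤ 1` and is
`O(t^{−m/2})`. -/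
theorem stmt_6 (m : ℕ) (hm : 0 < m) (lam : ℕ → ℝ) (hlam : ∀ n, lam n ≠ 0)
    (hW : WeylBound lam m) :
    ∃ C' > (0 : ℝ), ∀ t : ℝ, 0 < t → t ≤ 1 →
      Summable (fun n : ℕ => Real.exp (-(t * lam n ^ 2))) ∧
      (∑' n : ℕ, Real.exp (-(t * lam n ^ 2))) ≤ C' * t ^ (-(m : ℝ) / 2) :=
  stmt_6_general m lam hW
end

section
/- Let (λ_n)_{n∈ℕ} be a sequence of nonzero real numbers satisfying a Weyl-type counting bound of order m. Then there exist constants C > 0 and c > 0 such that for all t ≥ 1, Σ_n |λ_n|·exp(−t·λ_n²) ≤ C·exp(−c·t). -/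
open MeasureTheory Real Set

lemma aux_summable_shift (p : ℕ) :
    Summable (fun k : ℕ => ((k : ℝ) + 1) ^ p * Real.exp (-1) ^ k) := by
  have hr : ‖Real.exp (-1 : ℝ)‖ < 1 := by
    rw [Real.norm_eq_abs, abs_of_pos (Real.exp_pos _)]
    exact Real.exp_lt_one_iff.mpr (by norm_num)
  have hf : Summable (fun n : ℕ => (n : ℝ) ^ p * Real.exp (-1) ^ n) :=
    summable_pow_mul_geometric_of_norm_lt_one p hr
  have h2 : Summable (fun k : ℕ => ((k + 1 : ℕ) : ℝ) ^ p * Real.exp (-1) ^ (k + 1)) :=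
    (summable_nat_add_iff 1).mpr hf
  have h3 := h2.mul_left (Real.exp 1)
  refine h3.congr fun k => ?_
  push_cast
  have h4 : Real.exp 1 * Real.exp (-1) = 1 := by
    rw [← Real.exp_add]; norm_num
  rw [pow_succ]
  calc Real.exp 1 * (((k:ℝ) + 1) ^ p * (Real.exp (-1) ^ k * Real.exp (-1)))
      = (Real.exp 1 * Real.exp (-1)) * (((k:ℝ) + 1) ^ p * Real.exp (-1) ^ k) := by ring
    _ = ((k:ℝ) + 1) ^ p * Real.exp (-1) ^ k := by rw [h4, one_mul]

/-- Large-time exponential decay of `Σ |λ_n|·exp(−t·λ_n²)`. -/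
theorem stmt_7 (m : ℕ) (hm : 0 < m) (lam : ℕ → ℝ) (hlam : ∀ n, lam n ≠ 0)
    (hW : WeylBound lam m) :
    ∃ C > (0 : ℝ), ∃ c > (0 : ℝ), ∀ t : ℝ, 1 ≤ t →
      (∑' n : ℕ, |lam n| * Real.exp (-(t * lam n ^ 2))) ≤ C * Real.exp (-(c * t)) := by
  classical
  obtain ⟨Cw, hCw, hWb⟩ := hW
  -- a uniform positive lower bound on |lam n|
  obtain ⟨δ, hδ0, hδle⟩ : ∃ δ : ℝ, 0 < δ ∧ ∀ n, δ ≤ |lam n| := by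
    obtain ⟨h1fin, -⟩ := hWb 1 zero_le_one
    rcases h1fin.toFinset.eq_empty_or_nonempty with hF | hF
    · refine ⟨1, one_pos, fun n => ?_⟩
      by_contra h
      have : n ∈ h1fin.toFinset := by
        simp only [Set.Finite.mem_toFinset, Set.mem_setOf_eq]
        linarith
      simp [hF] at this
    · obtain ⟨n0, hn0, hmin⟩ := h1fin.toFinset.exists_min_image (fun n => |lam n|) hF
      refine ⟨|lam n0|, abs_pos.mpr (hlam n0), fun n => ?_⟩
      by_cases hn : n ∈ h1fin.toFinset
      · exact hmin n hn
      · have h1 : 1 < |lam n| := by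
          by_contra h
          exact hn (by simp only [Set.Finite.mem_toFinset, Set.mem_setOf_eq]; linarith)
        have h0 : |lam n0| ≤ 1 := by
          have := h1fin.mem_toFinset.mp hn0
          simpa using this
        linarith
  -- dominating sequence over shells
  have hGnn : ∀ k : ℕ, (0:ℝ) ≤
      Cw * (1 + ((k : ℝ) + 1)) ^ m * (((k : ℝ) + 1) * Real.exp (-((k : ℝ) ^ 2))) := by
    intro k; positivity
  have hGsum : Summable (fun k : ℕ =>
      Cw * (1 + ((k : ℝ) + 1)) ^ m * (((k : ℝ) + 1) * Real.exp (-((k : ℝ) ^ 2)))) := by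
    have hdom := (aux_summable_shift (m + 1)).mul_left (Cw * 2 ^ m)
    refine Summable.of_nonneg_of_le hGnn (fun k => ?_) hdom
    have h2 : Real.exp (-((k : ℝ) ^ 2)) ≤ Real.exp (-1) ^ k := by
      rw [← Real.exp_nat_mul]
      apply Real.exp_le_exp.mpr
      have hk2 : (k : ℝ) ≤ (k : ℝ) ^ 2 := by
        rcases Nat.eq_zero_or_pos k with h | h
        · simp [h]
        · have h1 : (1 : ℝ) ≤ (k : ℝ) := by exact_mod_cast h
          nlinarith
      linarith
    calc Cw * (1 + ((k : ℝ) + 1)) ^ m * (((k : ℝ) + 1) * Real.exp (-((k : ℝ) ^ 2)))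
        ≤ Cw * (2 * ((k : ℝ) + 1)) ^ m * (((k : ℝ) + 1) * Real.exp (-1) ^ k) := by
          gcongr
          linarith [Nat.cast_nonneg (α := ℝ) k]
      _ = Cw * 2 ^ m * (((k : ℝ) + 1) ^ (m + 1) * Real.exp (-1) ^ k) := by
          rw [mul_pow]; ring
  set S : ℝ := ∑' k : ℕ,
      Cw * (1 + ((k : ℝ) + 1)) ^ m * (((k : ℝ) + 1) * Real.exp (-((k : ℝ) ^ 2))) with hS
  have hSnn : 0 ≤ S := tsum_nonneg hGnn
  -- the key finite-sum bound at time t = 1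
  have hkey : ∀ u : Finset ℕ, ∑ n ∈ u, |lam n| * Real.exp (-(lam n ^ 2)) ≤ S := by
    intro u
    have hfib := Finset.sum_fiberwise_of_maps_to (s := u)
      (t := u.image fun n => ⌊|lam n|⌋₊) (g := fun n => ⌊|lam n|⌋₊)
      (fun n hn => Finset.mem_image_of_mem (fun n => ⌊|lam n|⌋₊) hn)
      (fun n => |lam n| * Real.exp (-(lam n ^ 2)))
    rw [← hfib]
    have hinner : ∀ k ∈ u.image (fun n => ⌊|lam n|⌋₊),
        ∑ n ∈ u.filter (fun n => ⌊|lam n|⌋₊ = k), |lam n| * Real.exp (-(lam n ^ 2)) ≤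
          Cw * (1 + ((k : ℝ) + 1)) ^ m * (((k : ℝ) + 1) * Real.exp (-((k : ℝ) ^ 2))) := by
      intro k _
      obtain ⟨hfinT, hcardT⟩ := hWb ((k : ℝ) + 1) (by positivity)
      have hsub : u.filter (fun n => ⌊|lam n|⌋₊ = k) ⊆ hfinT.toFinset := by
        intro n hn
        obtain ⟨-, hfl⟩ := Finset.mem_filter.mp hn
        rw [Set.Finite.mem_toFinset]
        have := Nat.lt_floor_add_one |lam n|
        rw [hfl] at this
        exact le_of_lt this
      have hcard : ((u.filter fun n => ⌊|lam n|⌋₊ = k).card : ℝ) ≤ Cw * (1 + ((k:ℝ)+1)) ^ m := by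
        refine le_trans ?_ hcardT
        have hle := Finset.card_le_card hsub
        rw [Set.ncard_eq_toFinset_card _ hfinT]
        exact_mod_cast hle
      have hterm : ∀ n ∈ u.filter (fun n => ⌊|lam n|⌋₊ = k),
          |lam n| * Real.exp (-(lam n ^ 2)) ≤ ((k : ℝ) + 1) * Real.exp (-((k : ℝ) ^ 2)) := by
        intro n hn
        obtain ⟨-, hfl⟩ := Finset.mem_filter.mp hn
        have h1 : |lam n| < (k : ℝ) + 1 := by
          have := Nat.lt_floor_add_one |lam n|; rw [hfl] at this; exact_mod_cast this
        have h2 : (k : ℝ) ≤ |lam n| := by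
          have := Nat.floor_le (abs_nonneg (lam n)); rw [hfl] at this; exact this
        have h3 : (k : ℝ) ^ 2 ≤ lam n ^ 2 := by
          rw [← sq_abs (lam n)]
          exact pow_le_pow_left₀ (Nat.cast_nonneg k) h2 2
        have h4 : Real.exp (-(lam n ^ 2)) ≤ Real.exp (-((k : ℝ) ^ 2)) :=
          Real.exp_le_exp.mpr (by linarith)
        exact mul_le_mul h1.le h4 (Real.exp_pos _).le (by positivity)
      calc ∑ n ∈ u.filter (fun n => ⌊|lam n|⌋₊ = k), |lam n| * Real.exp (-(lam n ^ 2))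
          ≤ (u.filter (fun n => ⌊|lam n|⌋₊ = k)).card • (((k : ℝ) + 1) * Real.exp (-((k:ℝ) ^ 2))) :=
            Finset.sum_le_card_nsmul _ _ _ hterm
        _ = ((u.filter (fun n => ⌊|lam n|⌋₊ = k)).card : ℝ) *
              (((k : ℝ) + 1) * Real.exp (-((k:ℝ) ^ 2))) := by rw [nsmul_eq_mul]
        _ ≤ Cw * (1 + ((k:ℝ)+1)) ^ m * (((k : ℝ) + 1) * Real.exp (-((k:ℝ) ^ 2))) := by
            exact mul_le_mul_of_nonneg_right hcard (by positivity)
    calc ∑ k ∈ u.image (fun n => ⌊|lam n|⌋₊),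
          ∑ n ∈ u.filter (fun n => ⌊|lam n|⌋₊ = k), |lam n| * Real.exp (-(lam n ^ 2))
        ≤ ∑ k ∈ u.image (fun n => ⌊|lam n|⌋₊),
            Cw * (1 + ((k : ℝ) + 1)) ^ m * (((k : ℝ) + 1) * Real.exp (-((k : ℝ) ^ 2))) :=
          Finset.sum_le_sum hinner
      _ ≤ S := Summable.sum_le_tsum _ (fun k _ => hGnn k) hGsum
  have hf1nn : ∀ n : ℕ, 0 ≤ |lam n| * Real.exp (-(lam n ^ 2)) := fun n => by positivity
  have hfs : Summable (fun n => |lam n| * Real.exp (-(lam n ^ 2))) :=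
    summable_of_sum_le hf1nn hkey
  have hft : (∑' n, |lam n| * Real.exp (-(lam n ^ 2))) ≤ S := Summable.tsum_le_of_sum_le hfs hkey
  -- conclude
  refine ⟨(S + 1) * Real.exp (δ ^ 2), by positivity, δ ^ 2, by positivity, fun t ht => ?_⟩
  set K : ℝ := Real.exp (δ ^ 2) * Real.exp (-(δ ^ 2 * t)) with hK
  have hKpos : 0 < K := by positivity
  have hcomp : ∀ n, |lam n| * Real.exp (-(t * lam n ^ 2)) ≤
      K * (|lam n| * Real.exp (-(lam n ^ 2))) := by
    intro n
    have hδ2 : δ ^ 2 ≤ lam n ^ 2 := by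
      rw [← sq_abs (lam n)]
      exact pow_le_pow_left₀ hδ0.le (hδle n) 2
    have hexp : Real.exp (-(t * lam n ^ 2)) ≤
        (Real.exp (δ ^ 2) * Real.exp (-(δ ^ 2 * t))) * Real.exp (-(lam n ^ 2)) := by
      rw [← Real.exp_add, ← Real.exp_add]
      apply Real.exp_le_exp.mpr
      nlinarith [hδ2, ht]
    calc |lam n| * Real.exp (-(t * lam n ^ 2))
        ≤ |lam n| * ((Real.exp (δ ^ 2) * Real.exp (-(δ ^ 2 * t))) * Real.exp (-(lam n ^ 2))) :=
          mul_le_mul_of_nonneg_left hexp (abs_nonneg _)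
      _ = K * (|lam n| * Real.exp (-(lam n ^ 2))) := by rw [hK]; ring
  have hcompnn : ∀ n : ℕ, 0 ≤ |lam n| * Real.exp (-(t * lam n ^ 2)) := fun n => by positivity
  have hsumK : Summable (fun n => K * (|lam n| * Real.exp (-(lam n ^ 2)))) := hfs.mul_left K
  calc (∑' n, |lam n| * Real.exp (-(t * lam n ^ 2)))
      ≤ ∑' n, K * (|lam n| * Real.exp (-(lam n ^ 2))) := by
        refine Summable.tsum_le_tsum hcomp ?_ hsumK
        exact Summable.of_nonneg_of_le hcompnn hcomp hsumK
    _ = K * ∑' n, |lam n| * Real.exp (-(lam n ^ 2)) := tsum_mul_left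
    _ ≤ K * (S + 1) := by
        apply mul_le_mul_of_nonneg_left (by linarith) hKpos.le
    _ = (S + 1) * Real.exp (δ ^ 2) * Real.exp (-(δ ^ 2 * t)) := by rw [hK]; ring
end

section
/- Let (λ_n)_{n∈ℕ} be a sequence of nonzero real numbers satisfying a Weyl-type counting bound of order m. Then for every complex number z with Re z > (m+1)/2, the function t ↦ Σ_n λ_n·exp(−t·λ_n²) is integrable against t^{(z+1/2)−1} dt on (0,∞), and ∫₀^∞ (Σ_n λ_n·exp(−t·λ_n²))·t^{(z+1/2)−1} dt = Γ(z+1/2)·Σ_n sgn(λ_n)·|λ_n|^{−2z}. -/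
open MeasureTheory Real Set

/-! The Weyl bound makes `∑ₙ |λₙ|^(-p)` converge for every `p > m`: the dyadic shell
`δ 2^j ≤ |λₙ| < δ 2^(j+1)` contains `O(2^(jm))` of the `λₙ`, so it contributes `O(2^(j(m-p)))`.
For `s = z + 1/2` each term of the heat trace is a Gamma integral,
`∫₀^∞ λ e^(-tλ²) t^(s-1) dt = Γ(s) λ / (λ²)^s = Γ(s) sgn λ |λ|^(-2z)`, and the same computation with
`Re s` shows that the integrals of the absolute values sum to `Γ(Re s) ∑ |λₙ|^(-2 Re z) < ∞` when
`2 Re z > m`. Hence the series may be integrated term by term. -/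

open Filter

theorem two_pow_log_floor_le {x : ℝ} (hx : 1 ≤ x) : (2 : ℝ) ^ Nat.log 2 ⌊x⌋₊ ≤ x := by
  have h0 : ⌊x⌋₊ ≠ 0 := (Nat.floor_pos.2 hx).ne'
  calc (2 : ℝ) ^ Nat.log 2 ⌊x⌋₊ ≤ ⌊x⌋₊ := by exact_mod_cast Nat.pow_log_le_self 2 h0
    _ ≤ x := Nat.floor_le (by linarith)

theorem lt_two_pow_log_floor_succ (x : ℝ) : x < (2 : ℝ) ^ (Nat.log 2 ⌊x⌋₊ + 1) := by
  have := Nat.lt_pow_succ_log_self one_lt_two ⌊x⌋₊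
  calc x < ⌊x⌋₊ + 1 := Nat.lt_floor_add_one x
    _ ≤ _ := by exact_mod_cast this

theorem exp_neg_le_factorial_div_pow {y : ℝ} (hy : 0 < y) (K : ℕ) :
    rexp (-y) ≤ K.factorial / y ^ K := by
  rw [Real.exp_neg, ← inv_div]
  exact inv_anti₀ (by positivity) (Real.pow_div_factorial_le_exp y hy.le K)

theorem abs_mul_exp_neg_mul_sq_le {t x : ℝ} (ht : 0 < t) (hx : x ≠ 0) (K : ℕ) :
    |x| * rexp (-(t * x ^ 2)) ≤ K.factorial / t ^ K * |x| ^ (-(2 * K - 1 : ℝ)) := by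
  have hx' : 0 < |x| := abs_pos.2 hx
  calc |x| * rexp (-(t * x ^ 2)) ≤ |x| * (K.factorial / (t * x ^ 2) ^ K) :=
        mul_le_mul_of_nonneg_left (exp_neg_le_factorial_div_pow (by positivity) K) hx'.le
    _ = K.factorial / t ^ K * |x| ^ (-(2 * K - 1 : ℝ)) := by
        rw [neg_sub, Real.rpow_sub hx', Real.rpow_one, ← sq_abs, mul_pow, ← pow_mul,
          show (2 * K : ℝ) = ((2 * K : ℕ) : ℝ) by push_cast; ring, Real.rpow_natCast]
        field_simp

theorem abs_div_sq_rpow {x : ℝ} (hx : x ≠ 0) (σ : ℝ) :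
    |x| / (x ^ 2) ^ (σ + 1 / 2) = |x| ^ (-(2 * σ)) := by
  calc |x| / (x ^ 2) ^ (σ + 1 / 2) = |x| ^ (1 : ℝ) / |x| ^ ((2 : ℕ) * (σ + 1 / 2)) := by
        rw [Real.rpow_one, Real.rpow_mul (abs_nonneg x), Real.rpow_natCast, sq_abs]
    _ = |x| ^ (-(2 * σ)) := by
        rw [← Real.rpow_sub (abs_pos.2 hx)]
        congr 1
        push_cast
        ring

theorem Real.sign_mul_abs_self (x : ℝ) : Real.sign x * |x| = x := by
  rcases lt_trichotomy x 0 with hx | rfl | hx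
  · rw [Real.sign_of_neg hx, abs_of_neg hx, neg_one_mul, neg_neg]
  · rw [abs_zero, mul_zero]
  · rw [Real.sign_of_pos hx, abs_of_pos hx, one_mul]

namespace WeylBound

variable {lam : ℕ → ℝ} {m : ℕ}

theorem tendsto_abs_cofinite_atTop (hW : WeylBound lam m) :
    Tendsto (fun n => |lam n|) cofinite atTop := by
  obtain ⟨C, -, hB⟩ := hW
  refine tendsto_atTop.2 fun T => ?_
  filter_upwards [(hB (max T 0) (le_max_right _ _)).1.eventually_cofinite_notMem] with n hn
  exact (le_max_left _ _).trans (not_le.1 hn).le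

theorem exists_pos_le_abs (hlam : ∀ n, lam n ≠ 0) (hW : WeylBound lam m) :
    ∃ δ > 0, ∀ n, δ ≤ |lam n| := by
  obtain ⟨n₀, hn₀⟩ := hW.tendsto_abs_cofinite_atTop.exists_forall_le
  exact ⟨|lam n₀|, abs_pos.2 (hlam n₀), hn₀⟩

theorem exists_card_le (hW : WeylBound lam m) :
    ∃ C > 0, ∀ T ≥ 0, ∀ u : Finset ℕ, (∀ n ∈ u, |lam n| ≤ T) →
      (u.card : ℝ) ≤ C * (1 + T) ^ m := by
  obtain ⟨C, hC, hB⟩ := hW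
  refine ⟨C, hC, fun T hT u hu => ?_⟩
  obtain ⟨hfin, hcard⟩ := hB T hT
  rw [← Set.ncard_coe_finset]
  exact le_trans (by exact_mod_cast Set.ncard_le_ncard hu hfin) hcard

theorem summable_abs_rpow_neg (hlam : ∀ n, lam n ≠ 0) (hW : WeylBound lam m) {p : ℝ}
    (hp : m < p) : Summable fun n => |lam n| ^ (-p) := by
  obtain ⟨δ, hδ, hδ_le⟩ := hW.exists_pos_le_abs hlam
  obtain ⟨C, hC, hcard⟩ := hW.exists_card_le
  set k : ℕ → ℕ := fun n => Nat.log 2 ⌊|lam n| / δ⌋₊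
  have hk_le (n : ℕ) : δ * 2 ^ k n ≤ |lam n| :=
    (le_div_iff₀' hδ).1 (two_pow_log_floor_le ((one_le_div hδ).2 (hδ_le n)))
  have hk_lt (n : ℕ) : |lam n| < δ * 2 ^ (k n + 1) :=
    (div_lt_iff₀' hδ).1 (lt_two_pow_log_floor_succ _)
  set r : ℝ := 2 ^ m * 2 ^ (-p)
  have hr0 : 0 ≤ r := by positivity
  have hr1 : r < 1 := by
    rw [show r = (2 : ℝ) ^ (m : ℝ) * 2 ^ (-p) by simp [r], ← Real.rpow_add two_pos]
    exact Real.rpow_lt_one_of_one_lt_of_neg one_lt_two (by linarith)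
  set A : ℝ := C * (1 + 2 * δ) ^ m * δ ^ (-p)
  have hshell (u : Finset ℕ) (j : ℕ) : ∑ n ∈ u with k n = j, |lam n| ^ (-p) ≤ A * r ^ j := by
    have hterm : ∀ n ∈ u.filter (k · = j), |lam n| ^ (-p) ≤ (δ * 2 ^ j) ^ (-p) := by
      intro n hn
      rw [← (Finset.mem_filter.1 hn).2]
      exact Real.rpow_le_rpow_of_nonpos (by positivity) (hk_le n)
        (by linarith [(m.cast_nonneg : (0 : ℝ) ≤ m)])
    have hcount : ((u.filter (k · = j)).card : ℝ) ≤ C * (1 + δ * 2 ^ (j + 1)) ^ m :=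
      hcard _ (by positivity) _ fun n hn => (Finset.mem_filter.1 hn).2 ▸ (hk_lt n).le
    have hgrowth : (1 + δ * 2 ^ (j + 1)) ^ m ≤ (1 + 2 * δ) ^ m * (2 ^ m) ^ j := by
      have : (1 : ℝ) ≤ 2 ^ j := one_le_pow₀ one_le_two
      rw [← pow_mul, mul_comm m, pow_mul, ← mul_pow]
      exact pow_le_pow_left₀ (by positivity) (by rw [pow_succ]; nlinarith) m
    calc ∑ n ∈ u with k n = j, |lam n| ^ (-p)
        ≤ (u.filter (k · = j)).card * (δ * 2 ^ j) ^ (-p) := by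
          simpa only [nsmul_eq_mul] using Finset.sum_le_card_nsmul _ _ _ hterm
      _ ≤ C * ((1 + 2 * δ) ^ m * (2 ^ m) ^ j) * (δ ^ (-p) * (2 ^ (-p)) ^ j) := by
          rw [Real.mul_rpow hδ.le (by positivity), ← Real.rpow_pow_comm zero_le_two]
          gcongr
          exact hcount.trans (by gcongr)
      _ = A * r ^ j := by ring
  refine summable_of_sum_le (c := A * (1 - r)⁻¹) (fun n => by positivity) fun u => ?_
  rw [← Finset.sum_fiberwise_of_maps_to (g := k) fun n hn => Finset.mem_image_of_mem k hn]
  calc _ ≤ ∑ j ∈ u.image k, A * r ^ j := Finset.sum_le_sum fun j _ => hshell u j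
    _ ≤ ∑' j, A * r ^ j :=
        Summable.sum_le_tsum _ (fun _ _ => by positivity)
          ((summable_geometric_of_lt_one hr0 hr1).mul_left A)
    _ = A * (1 - r)⁻¹ := by rw [tsum_mul_left, tsum_geometric_of_lt_one hr0 hr1]

theorem summable_mul_exp_neg_mul_sq (hlam : ∀ n, lam n ≠ 0) (hW : WeylBound lam m) {t : ℝ}
    (ht : 0 < t) :
    Summable fun n => lam n * rexp (-(t * lam n ^ 2)) := by
  have hp : (m : ℝ) < 2 * ((m + 1 : ℕ) : ℝ) - 1 := by push_cast; linarith
  refine Summable.of_norm_bounded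
    ((hW.summable_abs_rpow_neg hlam hp).mul_left ((m + 1).factorial / t ^ (m + 1))) fun n => ?_
  rw [norm_mul, Real.norm_eq_abs, Real.norm_eq_abs, Real.abs_exp]
  exact abs_mul_exp_neg_mul_sq_le ht (hlam n) _

end WeylBound

theorem integrable_of_hasSum_of_summable_integral_norm {ι α E : Type*} [Countable ι]
    [MeasurableSpace α] {μ : Measure α} [NormedAddCommGroup E] {F : ι → α → E} {f : α → E}
    (hF_int : ∀ i, Integrable (F i) μ) (hF_sum : Summable fun i => ∫ a, ‖F i a‖ ∂μ)
    (hf : ∀ᵐ a ∂μ, HasSum (fun i => F i a) (f a)) : Integrable f μ := by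
  refine ⟨aestronglyMeasurable_of_tendsto_ae atTop
    (fun u => Finset.aestronglyMeasurable_fun_sum u fun i _ => (hF_int i).1) hf, ?_⟩
  calc ∫⁻ a, ‖f a‖ₑ ∂μ ≤ ∫⁻ a, ∑' i, ‖F i a‖ₑ ∂μ :=
        lintegral_mono_ae (hf.mono fun a ha => ha.tsum_eq ▸ enorm_tsum_le_tsum_enorm)
    _ = ∑' i, ENNReal.ofReal (∫ a, ‖F i a‖ ∂μ) := by
        rw [lintegral_tsum fun i => (hF_int i).1.enorm]
        exact tsum_congr fun i => (ofReal_integral_norm_eq_lintegral_enorm (hF_int i)).symm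
    _ = ENNReal.ofReal (∑' i, ∫ a, ‖F i a‖ ∂μ) :=
        (ENNReal.ofReal_tsum_of_nonneg (fun i => integral_nonneg fun _ => norm_nonneg _)
          hF_sum).symm
    _ < ⊤ := ENNReal.ofReal_lt_top

section Mellin

open Complex

theorem integrable_cpow_mul_mul_exp_neg_mul {s : ℂ} (hs : 0 < s.re) {P : ℝ} (hP : 0 < P)
    (c : ℂ) :
    Integrable (fun t : ℝ => (t : ℂ) ^ (s - 1) * (c * rexp (-P * t)))
      (volume.restrict (Ioi 0)) := by
  have hbound := (integrableOn_rpow_mul_exp_neg_mul_rpow (s := s.re - 1) (by linarith) one_pos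
    hP).const_mul ‖c‖
  refine hbound.mono' (by fun_prop) ?_
  filter_upwards [ae_restrict_mem measurableSet_Ioi] with t ht
  rw [norm_mul, norm_mul, norm_cpow_eq_rpow_re_of_pos ht, norm_real, Real.norm_of_nonneg
    (Real.exp_pos _).le, Real.rpow_one, sub_re, one_re]
  exact le_of_eq (by ring)

theorem integral_norm_cpow_mul_mul_exp_neg_mul {s : ℂ} (hs : 0 < s.re) {P : ℝ} (hP : 0 < P)
    (c : ℂ) :
    ∫ t in Ioi (0 : ℝ), ‖(t : ℂ) ^ (s - 1) * (c * rexp (-P * t))‖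
      = Real.Gamma s.re * (‖c‖ / P ^ s.re) := by
  have h := Real.integral_rpow_mul_exp_neg_mul_Ioi hs hP
  rw [Real.div_rpow zero_le_one hP.le, Real.one_rpow] at h
  rw [show Real.Gamma s.re * (‖c‖ / P ^ s.re) = ‖c‖ * (1 / P ^ s.re * Real.Gamma s.re) by ring,
    ← h, ← integral_const_mul]
  refine setIntegral_congr_fun measurableSet_Ioi fun t ht => ?_
  rw [norm_mul, norm_mul, norm_cpow_eq_rpow_re_of_pos ht, sub_re, one_re, norm_real,
    Real.norm_of_nonneg (Real.exp_pos _).le, neg_mul]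
  ring

theorem mellinConvergent_of_hasSum_exp {ι : Type*} [Countable ι] {a : ι → ℂ} {p : ι → ℝ}
    {F : ℝ → ℂ} {s : ℂ} (hp : ∀ i, 0 < p i) (hs : 0 < s.re)
    (hF : ∀ t ∈ Ioi 0, HasSum (fun i => a i * rexp (-p i * t)) (F t))
    (h_sum : Summable fun i => ‖a i‖ / p i ^ s.re) : MellinConvergent F s := by
  refine integrable_of_hasSum_of_summable_integral_norm
    (F := fun i (t : ℝ) => (t : ℂ) ^ (s - 1) * (a i * rexp (-p i * t)))
    (fun i => integrable_cpow_mul_mul_exp_neg_mul hs (hp i) (a i)) ?_ ?_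
  · simpa only [integral_norm_cpow_mul_mul_exp_neg_mul hs (hp _)]
      using h_sum.mul_left (Real.Gamma s.re)
  · filter_upwards [ae_restrict_mem measurableSet_Ioi] with t ht
    exact (hF t ht).mul_left _

theorem ofReal_div_sq_cpow {x : ℝ} (hx : x ≠ 0) (z : ℂ) :
    (x : ℂ) / ((x ^ 2 : ℝ) : ℂ) ^ (z + 1 / 2) = Real.sign x * ((|x| : ℝ) : ℂ) ^ (-(2 * z)) := by
  have habs : ((|x| : ℝ) : ℂ) ≠ 0 := ofReal_ne_zero.2 (abs_ne_zero.2 hx)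
  have harg : ((|x| : ℝ) : ℂ).arg = 0 := arg_ofReal_of_nonneg (abs_nonneg x)
  have hsq : ((x ^ 2 : ℝ) : ℂ) ^ (z + 1 / 2) = ((|x| : ℝ) : ℂ) ^ (2 * z + 1) := by
    rw [← sq_abs, ofReal_pow, ← cpow_nat_mul' (by simp [harg, Real.pi_pos])
      (by simp [harg, Real.pi_pos.le])]
    ring_nf
  rw [hsq, div_eq_iff (cpow_ne_zero_iff.2 (Or.inl habs)), mul_assoc, ← cpow_add _ _ habs,
    show -(2 * z) + (2 * z + 1) = 1 by ring, cpow_one, ← ofReal_mul, Real.sign_mul_abs_self]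

end Mellin

open Complex in
theorem stmt_9_general (m : ℕ) (lam : ℕ → ℝ) (hlam : ∀ n, lam n ≠ 0)
    (hW : WeylBound lam m) (z : ℂ) (hz : ((m : ℝ) + 1) / 2 < z.re) :
    IntegrableOn
      (fun t : ℝ => ((∑' n : ℕ, lam n * Real.exp (-(t * lam n ^ 2)) : ℝ) : ℂ)
        * (t : ℂ) ^ (z + 1/2 - 1)) (Ioi 0) volume ∧
    ∫ t in Ioi (0 : ℝ),
        ((∑' n : ℕ, lam n * Real.exp (-(t * lam n ^ 2)) : ℝ) : ℂ) * (t : ℂ) ^ (z + 1/2 - 1)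
      = Complex.Gamma (z + 1/2)
          * ∑' n : ℕ, (Real.sign (lam n) : ℂ) * ((|lam n| : ℝ) : ℂ) ^ (-(2 * z)) := by
  set F : ℝ → ℂ := fun t => ((∑' n, lam n * rexp (-(t * lam n ^ 2)) : ℝ) : ℂ)
  have hs_re : (z + 1 / 2).re = z.re + 1 / 2 := by simp
  have hs : 0 < (z + 1 / 2).re := by rw [hs_re]; linarith [(m.cast_nonneg : (0 : ℝ) ≤ m)]
  have hsq (n : ℕ) : 0 < lam n ^ 2 := pow_two_pos_of_ne_zero (hlam n)
  have hF (t : ℝ) (ht : t ∈ Ioi 0) :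
      HasSum (fun n => (lam n : ℂ) * rexp (-(lam n ^ 2) * t)) (F t) := by
    simpa only [F, ofReal_mul, neg_mul, mul_comm t] using
      hasSum_ofReal.2 (hW.summable_mul_exp_neg_mul_sq hlam ht).hasSum
  have h_sum : Summable fun n => ‖(lam n : ℂ)‖ / (lam n ^ 2) ^ (z + 1 / 2).re := by
    simpa only [norm_real, Real.norm_eq_abs, hs_re, abs_div_sq_rpow (hlam _)] using
      hW.summable_abs_rpow_neg hlam (p := 2 * z.re) (by linarith)
  have h_comm : (fun t : ℝ => F t * (t : ℂ) ^ (z + 1 / 2 - 1))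
      = fun t : ℝ => (t : ℂ) ^ (z + 1 / 2 - 1) • F t := funext fun t => mul_comm _ _
  refine ⟨h_comm ▸ mellinConvergent_of_hasSum_exp hsq hs hF h_sum, ?_⟩
  rw [h_comm, ← mellin, ← (hasSum_mellin (fun n => Or.inr (hsq n)) hs hF h_sum).tsum_eq,
    ← tsum_mul_left]
  simp only [mul_div_assoc, ofReal_div_sq_cpow (hlam _)]

/-- The Mellin-transform identity `Γ(z+1/2)·η_D(2z) = ∫₀^∞ (Σ λ_n e^{−tλ_n²}) t^{(z+1/2)−1} dt`
for `Re z > (m+1)/2`. -/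
theorem stmt_9 (m : ℕ) (hm : 0 < m) (lam : ℕ → ℝ) (hlam : ∀ n, lam n ≠ 0)
    (hW : WeylBound lam m) (z : ℂ) (hz : ((m : ℝ) + 1) / 2 < z.re) :
    IntegrableOn
      (fun t : ℝ => ((∑' n : ℕ, lam n * Real.exp (-(t * lam n ^ 2)) : ℝ) : ℂ)
        * (t : ℂ) ^ (z + 1/2 - 1)) (Ioi 0) volume ∧
    ∫ t in Ioi (0 : ℝ),
        ((∑' n : ℕ, lam n * Real.exp (-(t * lam n ^ 2)) : ℝ) : ℂ) * (t : ℂ) ^ (z + 1/2 - 1)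
      = Complex.Gamma (z + 1/2)
          * ∑' n : ℕ, (Real.sign (lam n) : ℂ) * ((|lam n| : ℝ) : ℂ) ^ (-(2 * z)) :=
  stmt_9_general m lam hlam hW z hz
end

section
/- Let n be a positive even natural number, m ≥ 2 a natural number, ℓ an integer, and a_1, …, a_n integers such that m does not divide k·a_j for any 1 ≤ k ≤ m−1 and 1 ≤ j ≤ n. Set θ_j = 2π·a_j/m. Then (1/m)·Σ_{k=1}^{m−1} i^{−n}·(Π_{j=1}^{n} cot(k·θ_j/2))·(exp(−2πi·kℓ/m) − 1) = (2·(−1)^{n/2+1}/m)·Σ_{k=1}^{m−1} (Π_{j=1}^{n} cot(k·θ_j/2))·sin²(kℓπ/m), where the left-hand side is a complex number and the right-hand side is the corresponding real number regarded as complex. -/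
/-!
Write `c k` for the cotangent product. Since `(m - k) θ_j / 2 = a_j π - k θ_j / 2`, each factor
changes sign under `k ↦ m - k`, so for `n` even `c (m - k) = c k`. Reindexing the sum by
`k ↦ m - k` therefore replaces `e^{-2πikℓ/m}` by `e^{2πikℓ/m}`; averaging the two expressions
gives `Σ c k (cos (2πkℓ/m) - 1) = -2 Σ c k sin² (πkℓ/m)`, and `i^{-n} = (-1)^{n/2}`.
-/

open Finset Real

theorem Finset.sum_Icc_one_sub_reflect {M : Type*} [AddCommMonoid M] (f : ℕ → M) (m : ℕ) :
    ∑ k ∈ Icc 1 (m - 1), f (m - k) = ∑ k ∈ Icc 1 (m - 1), f k := by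
  refine sum_nbij' (m - ·) (m - ·) ?_ ?_ ?_ ?_ ?_ <;> intro k hk <;>
    simp only [mem_Icc] at hk ⊢ <;> omega

-- Also at the poles, where `cot x = cos x / 0 = 0`.
theorem Real.cot_int_mul_pi_sub (a : ℤ) (x : ℝ) : cot (a * π - x) = -cot x := by
  have hsign : ((-1 : ℝ) ^ a) ≠ 0 := zpow_ne_zero _ (by norm_num)
  rw [cot_eq_cos_div_sin, cot_eq_cos_div_sin, cos_int_mul_pi_sub, sin_int_mul_pi_sub,
    ← mul_neg, mul_div_mul_left _ _ hsign, div_neg]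

theorem prod_cot_reflect {m k : ℕ} (hm : m ≠ 0) (hk : k ≤ m) (a : ℕ → ℤ) (θ : ℕ → ℝ)
    (hθ : ∀ j, θ j = 2 * π * a j / m) (s : Finset ℕ) :
    ∏ j ∈ s, cot (((m - k : ℕ) : ℝ) * θ j / 2) = (-1) ^ #s * ∏ j ∈ s, cot (k * θ j / 2) := by
  have hcot (j : ℕ) : cot (((m - k : ℕ) : ℝ) * θ j / 2) = -cot (k * θ j / 2) := by
    rw [← cot_int_mul_pi_sub (a j), hθ, Nat.cast_sub hk]
    congr 1
    field_simp
  simp only [hcot, prod_neg]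

theorem Complex.exp_neg_reflect {m k : ℕ} (hm : m ≠ 0) (hk : k ≤ m) (ℓ : ℤ) :
    exp (-(2 * π * I * (m - k : ℕ) * ℓ / m)) = exp (2 * π * I * k * ℓ / m) := by
  have harg : -(2 * π * I * (m - k : ℕ) * ℓ / m)
      = 2 * π * I * k * ℓ / m + (-ℓ : ℤ) * (2 * π * I) := by
    push_cast [Nat.cast_sub hk]
    field_simp
    ring
  rw [harg, exp_add, exp_int_mul_two_pi_mul_I, mul_one]

theorem Complex.exp_neg_two_mul_I_add_exp_two_mul_I (x : ℝ) :
    (exp (-(2 * x * I)) - 1) + (exp (2 * x * I) - 1) = ((-4 * Real.sin x ^ 2 : ℝ) : ℂ) := by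
  have h := two_cos (2 * x)
  push_cast
  rw [cos_two_mul, cos_sq', neg_mul] at h
  linear_combination -h

theorem I_zpow_neg_of_even {n : ℕ} (hn : Even n) : Complex.I ^ (-(n : ℤ)) = (-1) ^ (n / 2) := by
  obtain ⟨t, rfl⟩ := hn
  rw [zpow_neg, zpow_natCast, ← two_mul, pow_mul, Complex.I_sq, Nat.mul_div_cancel_left _ two_pos,
    ← inv_pow, inv_neg, inv_one]

theorem sum_mul_exp_sub_one_of_reflect {m : ℕ} (ℓ : ℤ) (c : ℕ → ℝ)
    (hc : ∀ k ∈ Icc 1 (m - 1), c (m - k) = c k) :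
    ∑ k ∈ Icc 1 (m - 1), (c k : ℂ) * (Complex.exp (-(2 * π * Complex.I * k * ℓ / m)) - 1)
      = ((-2 * ∑ k ∈ Icc 1 (m - 1), c k * Real.sin (k * ℓ * π / m) ^ 2 : ℝ) : ℂ) := by
  have harg (k : ℕ) :
      2 * π * Complex.I * k * ℓ / m = 2 * ((k * ℓ * π / m : ℝ) : ℂ) * Complex.I := by
    push_cast
    ring
  have hrefl :
      ∑ k ∈ Icc 1 (m - 1), (c k : ℂ) * (Complex.exp (-(2 * π * Complex.I * k * ℓ / m)) - 1)
      = ∑ k ∈ Icc 1 (m - 1), (c k : ℂ) * (Complex.exp (2 * π * Complex.I * k * ℓ / m) - 1) := by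
    rw [← sum_Icc_one_sub_reflect]
    refine sum_congr rfl fun k hk => ?_
    have hk_bounds := mem_Icc.mp hk
    rw [hc k hk, Complex.exp_neg_reflect (by omega) (by omega)]
  have hpair : 2 * ∑ k ∈ Icc 1 (m - 1),
      (c k : ℂ) * (Complex.exp (-(2 * π * Complex.I * k * ℓ / m)) - 1)
      = ∑ k ∈ Icc 1 (m - 1), (c k : ℂ) * ((-4 * Real.sin (k * ℓ * π / m) ^ 2 : ℝ) : ℂ) := by
    rw [two_mul]
    nth_rewrite 2 [hrefl]
    rw [← sum_add_distrib]
    refine sum_congr rfl fun k _ => ?_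
    rw [← mul_add, harg, Complex.exp_neg_two_mul_I_add_exp_two_mul_I]
  apply mul_left_cancel₀ (two_ne_zero : (2 : ℂ) ≠ 0)
  rw [hpair]
  push_cast
  rw [mul_sum, mul_sum]
  exact sum_congr rfl fun k _ => by ring

theorem stmt_16_general (n : ℕ) (hn2 : Even n) (m : ℕ) (ℓ : ℤ)
    (a : ℕ → ℤ)
    (θ : ℕ → ℝ) (hθ : ∀ j, θ j = 2 * π * a j / m) :
    (1 / (m : ℂ)) * ∑ k ∈ Finset.Icc 1 (m - 1),
        Complex.I ^ (-(n : ℤ))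
          * ((∏ j ∈ Finset.Icc 1 n, Real.cot ((k : ℝ) * θ j / 2) : ℝ) : ℂ)
          * (Complex.exp (-(2 * (π : ℂ) * Complex.I * k * ℓ / m)) - 1)
      = (((2 * (-1 : ℝ) ^ (n / 2 + 1) / m) * ∑ k ∈ Finset.Icc 1 (m - 1),
          (∏ j ∈ Finset.Icc 1 n, Real.cot ((k : ℝ) * θ j / 2))
            * Real.sin ((k : ℝ) * ℓ * π / m) ^ 2 : ℝ) : ℂ) := by
  have hreflect : ∀ k ∈ Icc 1 (m - 1), ∏ j ∈ Icc 1 n, cot (((m - k : ℕ) : ℝ) * θ j / 2)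
      = ∏ j ∈ Icc 1 n, cot (k * θ j / 2) := by
    intro k hk
    have hk_bounds := mem_Icc.mp hk
    rw [prod_cot_reflect (by omega) (by omega) a θ hθ, Nat.card_Icc, Nat.add_sub_cancel,
      hn2.neg_one_pow, one_mul]
  simp only [mul_assoc (Complex.I ^ (-(n : ℤ))), ← mul_sum]
  rw [sum_mul_exp_sub_one_of_reflect ℓ (fun k => ∏ j ∈ Icc 1 n, cot (k * θ j / 2)) hreflect,
    I_zpow_neg_of_even hn2]
  push_cast
  ring

/-- Even-dimensional closed real form of the lens-space eta invariant: for `n` even,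
`θ_j = 2πa_j/m` with the `ℤ_m`-action free on the sphere,
`(1/m)·Σ_{k=1}^{m−1} i^{−n}·(Π_j cot(kθ_j/2))·(e^{−2πikℓ/m} − 1)
  = (2·(−1)^{n/2+1}/m)·Σ_{k=1}^{m−1} (Π_j cot(kθ_j/2))·sin²(kℓπ/m)`. -/
theorem stmt_16 (n : ℕ) (hn : 0 < n) (hn2 : Even n) (m : ℕ) (hm : 2 ≤ m) (ℓ : ℤ)
    (a : ℕ → ℤ)
    (hfree : ∀ k : ℕ, 1 ≤ k → k ≤ m - 1 → ∀ j, 1 ≤ j → j ≤ n → ¬ ((m : ℤ) ∣ (k : ℤ) * a j))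
    (θ : ℕ → ℝ) (hθ : ∀ j, θ j = 2 * π * a j / m) :
    (1 / (m : ℂ)) * ∑ k ∈ Finset.Icc 1 (m - 1),
        Complex.I ^ (-(n : ℤ))
          * ((∏ j ∈ Finset.Icc 1 n, Real.cot ((k : ℝ) * θ j / 2) : ℝ) : ℂ)
          * (Complex.exp (-(2 * (π : ℂ) * Complex.I * k * ℓ / m)) - 1)
      = (((2 * (-1 : ℝ) ^ (n / 2 + 1) / m) * ∑ k ∈ Finset.Icc 1 (m - 1),
          (∏ j ∈ Finset.Icc 1 n, Real.cot ((k : ℝ) * θ j / 2))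
            * Real.sin ((k : ℝ) * ℓ * π / m) ^ 2 : ℝ) : ℂ) :=
  stmt_16_general n hn2 m ℓ a θ hθ
end

section
/- For each integer ℓ with 0 ≤ ℓ ≤ 5, the real number E(ℓ) = (1/3)·Σ_{k=1}^{5} cot(kπ/6)·cot(5kπ/6)·sin²(kℓπ/6) satisfies: E(0) = 0, E(1) = E(5) = −2/3, E(2) = E(4) = −5/3, and E(3) = −2. -/
open Finset Real

/-- The lens-space eta sum `E(ℓ) = (1/3)·Σ_{k=1}^{5} cot(kπ/6)·cot(5kπ/6)·sin²(kℓπ/6)`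
for `S³/ℤ_6`. -/
noncomputable def E (ℓ : ℤ) : ℝ :=
  (1 / 3) * ∑ k ∈ Finset.Icc (1 : ℕ) 5,
    Real.cot ((k : ℝ) * π / 6) * Real.cot (5 * (k : ℝ) * π / 6)
      * Real.sin ((k : ℝ) * (ℓ : ℝ) * π / 6) ^ 2

/-! Since `5kπ/6 = kπ - kπ/6`, the two cotangents in each term are opposite, so
`E ℓ = -(1/3) Σ cot²(kπ/6) sin²(kℓπ/6)`. Writing `cot² = (1 - sin²)/sin²`, every term is a
rational function of the numbers `sin²(jπ/6)`, which depend only on `j mod 6` and equal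
`0, 1/4, 3/4, 1, 3/4, 1/4`. -/

lemma Real.cot_nat_mul_pi_sub (n : ℕ) (x : ℝ) : cot (n * π - x) = -cot x := by
  rw [cot_eq_cos_div_sin, cot_eq_cos_div_sin, cos_nat_mul_pi_sub, sin_nat_mul_pi_sub,
    div_neg, mul_div_mul_left _ _ (pow_ne_zero n (by norm_num : (-1 : ℝ) ≠ 0))]

-- Unconditional: where `sin x = 0`, both sides are `0` by the convention `a / 0 = 0`.
lemma Real.cot_sq_eq_one_sub_sin_sq_div_sin_sq (x : ℝ) :
    cot x ^ 2 = (1 - sin x ^ 2) / sin x ^ 2 := by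
  rw [cot_eq_cos_div_sin, div_pow, cos_sq']

lemma Real.sin_sq_add_nat_mul_pi (x : ℝ) (n : ℕ) : sin (x + n * π) ^ 2 = sin x ^ 2 := by
  rw [sin_add_nat_mul_pi, mul_pow, ← pow_mul, pow_mul', neg_one_sq, one_pow, one_mul]

lemma Real.sin_sq_nat_mul_pi_div_six (n : ℕ) :
    sin (n * π / 6) ^ 2 = ![0, 1 / 4, 3 / 4, 1, 3 / 4, 1 / 4] (Fin.ofNat 6 n) := by
  have hperiod : sin (n * π / 6) ^ 2 = sin ((Fin.ofNat 6 n).val * π / 6) ^ 2 := by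
    have hsplit : (n : ℝ) * π / 6 = (n % 6 : ℕ) * π / 6 + (n / 6 : ℕ) * π := by
      conv_lhs => rw [← Nat.mod_add_div n 6]
      push_cast; ring
    rw [hsplit, sin_sq_add_nat_mul_pi, Fin.val_ofNat]
  rw [hperiod]
  have h3 : √3 ^ 2 = 3 := sq_sqrt (by norm_num)
  generalize Fin.ofNat 6 n = j
  fin_cases j
  · simp
  · simp [sin_pi_div_six]; norm_num
  · simp [show (2 : ℝ) * π / 6 = π / 3 by ring, sin_pi_div_three, div_pow, h3]; norm_num
  · simp [show (3 : ℝ) * π / 6 = π / 2 by ring]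
  · simp [show (4 : ℝ) * π / 6 = π - π / 3 by ring, sin_pi_div_three, div_pow, h3]; norm_num
  · simp [show (5 : ℝ) * π / 6 = π - π / 6 by ring, sin_pi_div_six]; norm_num

lemma E_natCast (ℓ : ℕ) :
    E ℓ = -(1 / 3) * ∑ k ∈ Icc (1 : ℕ) 5,
      cot (k * π / 6) ^ 2 * sin ((k * ℓ : ℕ) * π / 6) ^ 2 := by
  rw [E, mul_sum, mul_sum]
  refine sum_congr rfl fun k _ => ?_
  have hcot : cot (5 * k * π / 6) = -cot (k * π / 6) := by
    rw [← cot_nat_mul_pi_sub k]; ring_nf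
  rw [hcot]; push_cast; ring

/-- Explicit evaluation: `E(0) = 0`, `E(1) = E(5) = −2/3`, `E(2) = E(4) = −5/3`,
`E(3) = −2`. -/
theorem stmt_18 :
    E 0 = 0 ∧ E 1 = -(2 / 3) ∧ E 5 = -(2 / 3) ∧ E 2 = -(5 / 3) ∧ E 4 = -(5 / 3) ∧
    E 3 = -2 := by
  refine ⟨?_, ?_, ?_, ?_, ?_, ?_⟩ <;>
  · erw [E_natCast]
    simp only [cot_sq_eq_one_sub_sin_sq_div_sin_sq, sin_sq_nat_mul_pi_div_six]
    norm_num [sum_Icc_succ_top, Fin.ofNat]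
end
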